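/- arXiv:1211.0477 — 3 statements merged into one kernel-verified Lean document; each statement's English description precedes it below -/
import Mathlib

section
/- Let h₊ be the discrete Dirichlet Laplacian on ℓ²(ℕ). For real x with |x| > 2 and all m, n ≥ 0, ⟨δ_m, (h₊ - x)⁻¹ δ_n⟩ = ζ₁(x)/(ζ₁(x)² - 1) · (ζ₁(x)^{|m-n|} - ζ₁(x)^{m+n+2}), where ζ₁(x) = (x/2)(1 - √(1-4/x²)). -/
/-!
`ζ₁(x)` is the root of `ζ² - xζ + 1 = 0` inside the unit disc. The sequence `j ↦ ζ^|j|` on `ℤ`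
solves `u(j+1) + u(j-1) = x u(j)` except at `j = 0`, where it has a jump, so a multiple of
`ζ^|j-n|` is the Green's function of the Laplacian on the full line. Subtracting its mirror image
`ζ^|j+n+2|` across `j = -1` makes it vanish at `-1`, which is exactly the Dirichlet condition
`(h₊u)(0) = u(1)`. This sequence is square summable because `|ζ| < 1`, so it is `(h₊ - x)⁻¹ δ_n`.
-/

noncomputable def zeta1 (x : ℝ) : ℝ := x / 2 * (1 - Real.sqrt (1 - 4 / x ^ 2))

noncomputable abbrev L2 := lp (fun _ : ℕ => ℂ) 2

open scoped ENNReal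

section Zeta1

variable {x : ℝ}

lemma sq_sqrt_one_sub_four_div (hx : 2 ≤ |x|) :
    Real.sqrt (1 - 4 / x ^ 2) ^ 2 * x ^ 2 = x ^ 2 - 4 := by
  have hx4 : 4 ≤ x ^ 2 := by nlinarith [sq_abs x]
  have hx0 : x ≠ 0 := by rintro rfl; norm_num at hx4
  rw [Real.sq_sqrt (by rw [sub_nonneg, div_le_one₀ (by positivity)]; exact hx4)]
  field_simp

lemma zeta1_sq_sub_mul_add_one (hx : 2 ≤ |x|) : zeta1 x ^ 2 - x * zeta1 x + 1 = 0 := by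
  unfold zeta1
  linear_combination sq_sqrt_one_sub_four_div hx / 4

lemma abs_zeta1_lt_one (hx : 2 < |x|) : |zeta1 x| < 1 := by
  set s := Real.sqrt (1 - 4 / x ^ 2)
  -- the other root `x/2 (1 + s)` has modulus `> 1`, and the product of the roots is `1`
  have hprod : zeta1 x * (x / 2 * (1 + s)) = 1 := by
    unfold zeta1
    linear_combination (-1 / 4) * sq_sqrt_one_sub_four_div hx.le
  have hother : 1 < |x / 2 * (1 + s)| := by
    rw [abs_mul, abs_div, abs_two, abs_of_pos (by positivity : (0 : ℝ) < 1 + s)]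
    nlinarith [Real.sqrt_nonneg (1 - 4 / x ^ 2)]
  have h1 : |zeta1 x| * |x / 2 * (1 + s)| = 1 := by rw [← abs_mul, hprod, abs_one]
  nlinarith [abs_nonneg (zeta1 x)]

end Zeta1

section GreenFunction

variable {w E : ℂ}

lemma pow_natAbs_add_one_add_pow_natAbs_sub_one (hw : w ^ 2 - E * w + 1 = 0) (j : ℤ) :
    w ^ (j + 1).natAbs + w ^ (j - 1).natAbs - E * w ^ j.natAbs
      = if j = 0 then 2 * w - E else 0 := by
  obtain ⟨k, rfl | rfl⟩ := Int.eq_nat_or_neg j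
  · cases k with
    | zero => simp [two_mul]
    | succ k =>
      have h1 : ((k + 1 : ℕ) + 1 : ℤ).natAbs = k + 2 := by omega
      have h2 : ((k + 1 : ℕ) - 1 : ℤ).natAbs = k := by omega
      rw [h1, h2, if_neg (by omega), Int.natAbs_natCast]
      linear_combination w ^ k * hw
  · cases k with
    | zero => simp [two_mul]
    | succ k =>
      have h1 : (-(k + 1 : ℕ) + 1 : ℤ).natAbs = k := by omega
      have h2 : (-(k + 1 : ℕ) - 1 : ℤ).natAbs = k + 2 := by omega
      rw [h1, h2, if_neg (by omega), Int.natAbs_neg, Int.natAbs_natCast]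
      linear_combination w ^ k * hw

noncomputable def halfLineGreen (w : ℂ) (n : ℕ) (j : ℤ) : ℂ :=
  w / (w ^ 2 - 1) * (w ^ (j - n).natAbs - w ^ (j + n + 2).natAbs)

lemma halfLineGreen_neg_one (n : ℕ) : halfLineGreen w n (-1) = 0 := by
  have h : (-1 - n : ℤ).natAbs = (-1 + n + 2 : ℤ).natAbs := by omega
  rw [halfLineGreen, h, sub_self, mul_zero]

lemma halfLineGreen_add_one_add_sub_one (hw : w ^ 2 - E * w + 1 = 0) (hw1 : w ^ 2 ≠ 1)
    (n : ℕ) {j : ℤ} (hj : 0 ≤ j) :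
    halfLineGreen w n (j + 1) + halfLineGreen w n (j - 1) - E * halfLineGreen w n j
      = if j = n then 1 else 0 := by
  have hjump : w / (w ^ 2 - 1) * (2 * w - E) = 1 := by
    rw [div_mul_eq_mul_div, div_eq_one_iff_eq (sub_ne_zero.mpr hw1)]
    linear_combination hw
  have hdirect := pow_natAbs_add_one_add_pow_natAbs_sub_one hw (j - n)
  have hmirror := pow_natAbs_add_one_add_pow_natAbs_sub_one hw (j + n + 2)
  rw [if_neg (by omega)] at hmirror
  have e1 : j + 1 - n = j - n + 1 := by ring
  have e2 : j - 1 - n = j - n - 1 := by ring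
  have e3 : j + 1 + n + 2 = j + n + 2 + 1 := by ring
  have e4 : j - 1 + n + 2 = j + n + 2 - 1 := by ring
  simp only [halfLineGreen, e1, e2, e3, e4]
  by_cases hjn : j = n
  · rw [if_pos (sub_eq_zero.mpr hjn)] at hdirect
    rw [if_pos hjn]
    linear_combination w / (w ^ 2 - 1) * (hdirect - hmirror) + hjump
  · rw [if_neg (sub_ne_zero.mpr hjn)] at hdirect
    rw [if_neg hjn]
    linear_combination w / (w ^ 2 - 1) * (hdirect - hmirror)

lemma summable_norm_pow_natAbs_add (hw : ‖w‖ < 1) (a : ℤ) :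
    Summable fun k : ℕ => ‖w‖ ^ ((k : ℤ) + a).natAbs := by
  refine (summable_nat_add_iff a.natAbs).mp ?_
  have h (k : ℕ) : (((k + a.natAbs : ℕ) : ℤ) + a).natAbs = k + (a.natAbs + a).natAbs := by omega
  simp_rw [h, pow_add]
  exact (summable_geometric_of_lt_one (norm_nonneg w) hw).mul_right _

lemma memℓp_halfLineGreen (hw : ‖w‖ < 1) (n : ℕ) {p : ℝ≥0∞} (hp : 1 ≤ p) :
    Memℓp (fun k : ℕ => halfLineGreen w n k) p := by
  have hpow (a : ℤ) : Memℓp (fun k : ℕ => w ^ ((k : ℤ) + a).natAbs) p :=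
    (memℓp_gen (by simpa using summable_norm_pow_natAbs_add hw a)).of_exponent_ge hp
  simp only [halfLineGreen, sub_eq_add_neg _ (n : ℤ), add_assoc _ (n : ℤ)]
  exact ((hpow _).sub (hpow _)).const_mul _

end GreenFunction

section DirichletLaplacian

variable {H : L2 →L[ℂ] L2}

lemma apply_eq_of_eq_extension (hH0 : ∀ u : L2, (H u : ∀ _ : ℕ, ℂ) 0 = (u : ∀ _ : ℕ, ℂ) 1)
    (hHn : ∀ u : L2, ∀ n : ℕ,
      (H u : ∀ _ : ℕ, ℂ) (n + 1) = (u : ∀ _ : ℕ, ℂ) (n + 2) + (u : ∀ _ : ℕ, ℂ) n)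
    {u : L2} {f : ℤ → ℂ} (hu : ∀ k : ℕ, (u : ∀ _ : ℕ, ℂ) k = f k) (hf : f (-1) = 0) (k : ℕ) :
    (H u : ∀ _ : ℕ, ℂ) k = f (k + 1) + f (k - 1) := by
  cases k with
  | zero => simp [hH0, hu, hf]
  | succ k => rw [hHn, hu, hu]; push_cast; ring_nf

lemma sub_smul_one_apply_eq_single (hH0 : ∀ u : L2, (H u : ∀ _ : ℕ, ℂ) 0 = (u : ∀ _ : ℕ, ℂ) 1)
    (hHn : ∀ u : L2, ∀ n : ℕ,
      (H u : ∀ _ : ℕ, ℂ) (n + 1) = (u : ∀ _ : ℕ, ℂ) (n + 2) + (u : ∀ _ : ℕ, ℂ) n)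
    {w E : ℂ} (hw : w ^ 2 - E * w + 1 = 0) (hw1 : w ^ 2 ≠ 1)
    {n : ℕ} {u : L2} (hu : ∀ k : ℕ, (u : ∀ _ : ℕ, ℂ) k = halfLineGreen w n k) :
    (H - E • 1) u = lp.single 2 n 1 := by
  ext k
  have hHu := apply_eq_of_eq_extension hH0 hHn hu (halfLineGreen_neg_one n) k
  have hrec := halfLineGreen_add_one_add_sub_one hw hw1 n (Int.natCast_nonneg k)
  simp only [sub_apply, smul_apply, one_apply_eq_self, lp.coeFn_sub, lp.coeFn_smul, Pi.sub_apply,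
    Pi.smul_apply, smul_eq_mul, hHu, hu, hrec, lp.single_apply, Nat.cast_inj, Pi.single_apply]

end DirichletLaplacian

theorem stmt3_general (H : L2 →L[ℂ] L2)
    (hH0 : ∀ u : L2, (H u : ∀ _ : ℕ, ℂ) 0 = (u : ∀ _ : ℕ, ℂ) 1)
    (hHn : ∀ u : L2, ∀ n : ℕ,
      (H u : ∀ _ : ℕ, ℂ) (n + 1) = (u : ∀ _ : ℕ, ℂ) (n + 2) + (u : ∀ _ : ℕ, ℂ) n)
    (x : ℝ) (hx : 2 < |x|)
    (R : L2 →L[ℂ] L2)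
    (hR2 : R * (H - (x : ℂ) • 1) = 1)
    (m n : ℕ) :
    (inner ℂ (lp.single 2 m (1 : ℂ)) (R (lp.single 2 n (1 : ℂ))) : ℂ)
      = ((zeta1 x / ((zeta1 x) ^ 2 - 1) *
          ((zeta1 x) ^ ((m : ℤ) - n).natAbs - (zeta1 x) ^ (m + n + 2)) : ℝ) : ℂ) := by
  set w : ℂ := (zeta1 x : ℂ)
  have hzlt : |zeta1 x| < 1 := abs_zeta1_lt_one hx
  have hw : w ^ 2 - x * w + 1 = 0 := by simp only [w]; exact_mod_cast zeta1_sq_sub_mul_add_one hx.le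
  have hwlt : ‖w‖ < 1 := by rwa [Complex.norm_real, Real.norm_eq_abs]
  have hw1 : w ^ 2 ≠ 1 := by
    simp only [w]; exact_mod_cast ((sq_lt_one_iff_abs_lt_one _).mpr hzlt).ne
  let u : L2 := ⟨fun k => halfLineGreen w n k, memℓp_halfLineGreen hwlt n one_le_two⟩
  have hRu : R (lp.single 2 n 1) = u := by
    rw [← sub_smul_one_apply_eq_single hH0 hHn hw hw1 (u := u) fun _ => rfl]
    exact DFunLike.congr_fun hR2 u
  have hmn : ((m : ℤ) + n + 2).natAbs = m + n + 2 := by omega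
  rw [hRu, lp.inner_single_left]
  simp only [u, halfLineGreen, hmn, RCLike.inner_apply, map_one, mul_one, w]
  push_cast
  rfl

/-- Full matrix elements of the resolvent of the half-line Dirichlet Laplacian:
`⟨δ_m, (h₊ - x)⁻¹ δ_n⟩ = ζ₁/(ζ₁²-1) · (ζ₁^{|m-n|} - ζ₁^{m+n+2})` for `|x| > 2`. -/
theorem stmt3 (H : L2 →L[ℂ] L2)
    (hH0 : ∀ u : L2, (H u : ∀ _ : ℕ, ℂ) 0 = (u : ∀ _ : ℕ, ℂ) 1)
    (hHn : ∀ u : L2, ∀ n : ℕ,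
      (H u : ∀ _ : ℕ, ℂ) (n + 1) = (u : ∀ _ : ℕ, ℂ) (n + 2) + (u : ∀ _ : ℕ, ℂ) n)
    (x : ℝ) (hx : 2 < |x|)
    (R : L2 →L[ℂ] L2)
    (hR1 : (H - (x : ℂ) • 1) * R = 1) (hR2 : R * (H - (x : ℂ) • 1) = 1)
    (m n : ℕ) :
    (inner ℂ (lp.single 2 m (1 : ℂ)) (R (lp.single 2 n (1 : ℂ))) : ℂ)
      = ((zeta1 x / ((zeta1 x) ^ 2 - 1) *
          ((zeta1 x) ^ ((m : ℤ) - n).natAbs - (zeta1 x) ^ (m + n + 2)) : ℝ) : ℂ) :=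
  stmt3_general H hH0 hHn x hx R hR2 m n
end

section
/- With G(x; v) = E₀ - x + τ²(ζ₁(x-v) + ζ₁(x)), E₀ ≥ 10, |τ| small: the function g₂(v) := G(-2+v; v) = E₀ + 2 - v + τ²(ζ₁(-2) + ζ₁(-2+v)) is strictly decreasing in v > 4, satisfies g₂(v) > G(2+v; v) ≥ 0 for 4 ≤ v ≤ v_{c,1}, and there is a unique v_{c,2} > v_{c,1} with g₂(v_{c,2}) = 0; for every v > v_{c,2} there exists a unique λ(v) ∈ (2, v-2) with G(λ(v); v) = 0, while for 4 < v ≤ v_{c,2} the function G(·; v) has no zero in (2, -2+v). -/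
noncomputable def Gf (E₀ τ x v : ℝ) : ℝ := E₀ - x + τ ^ 2 * (zeta1 (x - v) + zeta1 x)

/-!
For `x ≥ 2` one has `ζ₁(x) = 2 / (x (1 + √(1 - 4/x²)))`, so `ζ₁` decreases from `1` towards `0`
on `[2, ∞)`; being odd, it decreases on `(-∞, -2]` with values in `[-1, 0)`. Hence `G(·; v)` is
continuous and strictly decreasing on `[2, v - 2]`, where both arguments of `ζ₁` lie outside
`(-2, 2)`, and so is `g₂` on `[4, ∞)`. For `τ² ≤ 1` the perturbation `τ² (ζ₁(x - v) + ζ₁ x)` has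
absolute value at most `2`, which gives the signs needed by the intermediate value theorem:
`g₂(v_{c,1}) > G(2 + v_{c,1}; v_{c,1}) = 0`, `g₂(v) < 0` for `v > E₀ + 2`, and
`G(2; v) ≥ E₀ - 2 > 0`, since `G(2 + v_{c,1}; v_{c,1}) = 0` forces `E₀ ≥ v_{c,1} > 4`.
-/

open Set

lemma exists_unique_zero_of_strictAntiOn {f : ℝ → ℝ} {a b : ℝ} (hab : a ≤ b)
    (hcont : ContinuousOn f (Icc a b)) (hanti : StrictAntiOn f (Icc a b))
    (ha : 0 < f a) (hb : f b < 0) : ∃! x, x ∈ Ioo a b ∧ f x = 0 := by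
  obtain ⟨x, hx, hfx⟩ := intermediate_value_Ioo' hab hcont ⟨hb, ha⟩
  exact ⟨x, ⟨hx, hfx⟩, fun y ⟨hy, hfy⟩ =>
    hanti.injOn (Ioo_subset_Icc_self hy) (Ioo_subset_Icc_self hx) (hfy.trans hfx.symm)⟩

section zeta1

lemma zeta1_neg (x : ℝ) : zeta1 (-x) = -zeta1 x := by
  simp only [zeta1, neg_sq]
  ring

lemma zeta1_two : zeta1 2 = 1 := by
  norm_num [zeta1]

lemma zeta1_neg_two : zeta1 (-2) = -1 := by
  rw [zeta1_neg, zeta1_two]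

lemma zeta1_eq_two_div {x : ℝ} (hx : 2 ≤ x) :
    zeta1 x = 2 / (x * (1 + Real.sqrt (1 - 4 / x ^ 2))) := by
  have hx0 : x ≠ 0 := by positivity
  have hsq : Real.sqrt (1 - 4 / x ^ 2) ^ 2 = 1 - 4 / x ^ 2 := by
    refine Real.sq_sqrt ?_
    rw [sub_nonneg, div_le_one (by positivity)]
    nlinarith
  rw [zeta1, eq_div_iff (by positivity)]
  field_simp at hsq ⊢
  linear_combination (-1 : ℝ) * hsq

lemma zeta1_strictAntiOn_Ici : StrictAntiOn zeta1 (Ici 2) := by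
  intro a (ha : 2 ≤ a) b (hb : 2 ≤ b) hab
  rw [zeta1_eq_two_div ha, zeta1_eq_two_div hb]
  have hsqrt : Real.sqrt (1 - 4 / a ^ 2) ≤ Real.sqrt (1 - 4 / b ^ 2) := by
    gcongr
  have hden : a * (1 + Real.sqrt (1 - 4 / a ^ 2)) < b * (1 + Real.sqrt (1 - 4 / b ^ 2)) := by
    nlinarith [Real.sqrt_nonneg (1 - 4 / a ^ 2)]
  gcongr 2 / ?_

lemma zeta1_strictAntiOn_Iic : StrictAntiOn zeta1 (Iic (-2)) := by
  intro a (ha : a ≤ -2) b (hb : b ≤ -2) hab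
  have h := zeta1_strictAntiOn_Ici (a := -b) (b := -a)
    (by simp only [mem_Ici]; linarith) (by simp only [mem_Ici]; linarith) (neg_lt_neg hab)
  rw [zeta1_neg, zeta1_neg] at h
  linarith

lemma zeta1_pos {x : ℝ} (hx : 2 ≤ x) : 0 < zeta1 x := by
  rw [zeta1_eq_two_div hx]
  positivity

lemma zeta1_le_one {x : ℝ} (hx : 2 ≤ x) : zeta1 x ≤ 1 :=
  zeta1_two ▸ zeta1_strictAntiOn_Ici.antitoneOn self_mem_Ici hx hx

lemma neg_one_le_zeta1 {x : ℝ} (hx : x ≤ -2) : -1 ≤ zeta1 x := by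
  have h := zeta1_le_one (x := -x) (by linarith)
  rw [zeta1_neg] at h
  linarith

lemma continuousAt_zeta1 {x : ℝ} (hx : x ≠ 0) : ContinuousAt zeta1 x := by
  unfold zeta1
  fun_prop (disch := positivity)

end zeta1

section Gf

variable (E₀ τ : ℝ)

lemma Gf_neg_two_add_self (v : ℝ) :
    Gf E₀ τ (-2 + v) v = E₀ + 2 - v + τ ^ 2 * (zeta1 (-2) + zeta1 (-2 + v)) := by
  rw [Gf, add_sub_cancel_right]
  ring

lemma Gf_two_add_self (v : ℝ) :
    Gf E₀ τ (2 + v) v = E₀ - 2 - v + τ ^ 2 * (1 + zeta1 (2 + v)) := by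
  rw [Gf, add_sub_cancel_right, zeta1_two]
  ring

lemma Gf_strictAntiOn (v : ℝ) : StrictAntiOn (fun x => Gf E₀ τ x v) (Icc 2 (v - 2)) := by
  intro a ha b hb hab
  have h₁ : zeta1 b ≤ zeta1 a := zeta1_strictAntiOn_Ici.antitoneOn ha.1 hb.1 hab.le
  have h₂ : zeta1 (b - v) ≤ zeta1 (a - v) :=
    zeta1_strictAntiOn_Iic.antitoneOn (by simp only [mem_Iic]; linarith [ha.2])
      (by simp only [mem_Iic]; linarith [hb.2]) (by linarith)
  simp only [Gf]
  nlinarith [mul_le_mul_of_nonneg_left (add_le_add h₂ h₁) (sq_nonneg τ)]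

lemma Gf_continuousOn (v : ℝ) : ContinuousOn (fun x => Gf E₀ τ x v) (Icc 2 (v - 2)) := by
  refine fun x hx => ContinuousAt.continuousWithinAt ?_
  have h₁ : ContinuousAt zeta1 x := continuousAt_zeta1 (by linarith [hx.1])
  have h₂ : ContinuousAt zeta1 (x - v) := continuousAt_zeta1 (by linarith [hx.2])
  unfold Gf
  fun_prop

lemma Gf_neg_two_add_self_strictAntiOn :
    StrictAntiOn (fun v => Gf E₀ τ (-2 + v) v) (Ici 4) := by
  intro a (ha : 4 ≤ a) b (hb : 4 ≤ b) hab
  have h : zeta1 (-2 + b) ≤ zeta1 (-2 + a) :=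
    zeta1_strictAntiOn_Ici.antitoneOn (by simp only [mem_Ici]; linarith)
      (by simp only [mem_Ici]; linarith) (by linarith)
  simp only [Gf_neg_two_add_self]
  nlinarith [mul_le_mul_of_nonneg_left h (sq_nonneg τ)]

lemma Gf_neg_two_add_self_continuousOn :
    ContinuousOn (fun v => Gf E₀ τ (-2 + v) v) (Ici 4) := by
  refine fun v (hv : 4 ≤ v) => ContinuousAt.continuousWithinAt ?_
  have h : ContinuousAt zeta1 (-2 + v) := continuousAt_zeta1 (by linarith)
  simp only [Gf_neg_two_add_self]
  fun_prop

lemma Gf_two_add_self_antitoneOn : AntitoneOn (fun v => Gf E₀ τ (2 + v) v) (Ici 0) := by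
  intro a (ha : 0 ≤ a) b (hb : 0 ≤ b) hab
  have h : zeta1 (2 + b) ≤ zeta1 (2 + a) :=
    zeta1_strictAntiOn_Ici.antitoneOn (by simp only [mem_Ici]; linarith)
      (by simp only [mem_Ici]; linarith) (by linarith)
  simp only [Gf_two_add_self]
  nlinarith [mul_le_mul_of_nonneg_left h (sq_nonneg τ)]

variable {E₀ τ}

lemma Gf_two_add_self_le {v : ℝ} (hτ : τ ^ 2 ≤ 1) (hv : 0 ≤ v) : Gf E₀ τ (2 + v) v ≤ E₀ - v := by
  have h := zeta1_le_one (x := 2 + v) (by linarith)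
  rw [Gf_two_add_self]
  nlinarith [mul_le_mul_of_nonneg_left h (sq_nonneg τ)]

lemma Gf_two_add_self_lt {v : ℝ} (hτ : τ ^ 2 ≤ 1) (hv : 4 ≤ v) :
    Gf E₀ τ (2 + v) v < Gf E₀ τ (-2 + v) v := by
  have h₁ := zeta1_le_one (x := 2 + v) (by linarith)
  have h₂ := zeta1_pos (x := -2 + v) (by linarith)
  rw [Gf_two_add_self, Gf_neg_two_add_self, zeta1_neg_two]
  nlinarith [mul_le_mul_of_nonneg_left h₁ (sq_nonneg τ), mul_nonneg (sq_nonneg τ) h₂.le]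

lemma Gf_neg_two_add_self_le {v : ℝ} (hv : 4 ≤ v) : Gf E₀ τ (-2 + v) v ≤ E₀ + 2 - v := by
  have h := zeta1_le_one (x := -2 + v) (by linarith)
  rw [Gf_neg_two_add_self, zeta1_neg_two]
  nlinarith [mul_le_mul_of_nonneg_left h (sq_nonneg τ)]

lemma Gf_two_pos {v : ℝ} (hE : 2 < E₀) (hv : 4 ≤ v) : 0 < Gf E₀ τ 2 v := by
  have h := neg_one_le_zeta1 (x := 2 - v) (by linarith)
  rw [Gf, zeta1_two]
  nlinarith [mul_nonneg (sq_nonneg τ) (by linarith : 0 ≤ zeta1 (2 - v) + 1)]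

lemma Gf_pos_of_mem_Ioo {v x : ℝ} (hv : 0 ≤ Gf E₀ τ (-2 + v) v) (hx : x ∈ Ioo 2 (-2 + v)) :
    0 < Gf E₀ τ x v := by
  rw [neg_add_eq_sub] at hv hx
  exact hv.trans_lt <| Gf_strictAntiOn E₀ τ v ⟨hx.1.le, hx.2.le⟩
    ⟨hx.1.le.trans hx.2.le, le_rfl⟩ hx.2

end Gf

theorem stmt9_general (E₀ : ℝ) :
    ∃ τ₀ > (0 : ℝ), ∀ τ : ℝ, τ ≠ 0 → |τ| ≤ τ₀ →
      ∀ vc1 : ℝ, 4 < vc1 → Gf E₀ τ (2 + vc1) vc1 = 0 →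
        (∀ v : ℝ, Gf E₀ τ (-2 + v) v
            = E₀ + 2 - v + τ ^ 2 * (zeta1 (-2) + zeta1 (-2 + v))) ∧
        StrictAntiOn (fun v => Gf E₀ τ (-2 + v) v) (Set.Ioi 4) ∧
        (∀ v ∈ Set.Icc (4 : ℝ) vc1,
          Gf E₀ τ (2 + v) v < Gf E₀ τ (-2 + v) v ∧ 0 ≤ Gf E₀ τ (2 + v) v) ∧
        ∃ vc2 : ℝ, vc1 < vc2 ∧ Gf E₀ τ (-2 + vc2) vc2 = 0 ∧
          (∀ v : ℝ, 4 < v → Gf E₀ τ (-2 + v) v = 0 → v = vc2) ∧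
          (∀ v : ℝ, vc2 < v →
            ∃! lam : ℝ, lam ∈ Set.Ioo 2 (v - 2) ∧ Gf E₀ τ lam v = 0) ∧
          (∀ v : ℝ, 4 < v → v ≤ vc2 → ∀ x ∈ Set.Ioo (2 : ℝ) (-2 + v), Gf E₀ τ x v ≠ 0) := by
  refine ⟨1, one_pos, fun τ _ hτ vc1 hvc1 hvc1_zero => ?_⟩
  have hτ2 : τ ^ 2 ≤ 1 := (sq_le_one_iff_abs_le_one τ).2 hτ
  have hE₀ : vc1 ≤ E₀ := by linarith [Gf_two_add_self_le (E₀ := E₀) hτ2 (by linarith : 0 ≤ vc1)]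
  have hanti := Gf_neg_two_add_self_strictAntiOn E₀ τ
  have hbelow (v : ℝ) (hv : v ∈ Icc 4 vc1) :
      Gf E₀ τ (2 + v) v < Gf E₀ τ (-2 + v) v ∧ 0 ≤ Gf E₀ τ (2 + v) v :=
    ⟨Gf_two_add_self_lt hτ2 hv.1, hvc1_zero ▸ Gf_two_add_self_antitoneOn E₀ τ
      (by simp only [mem_Ici]; linarith [hv.1]) (by simp only [mem_Ici]; linarith) hv.2⟩
  set V := max (vc1 + 1) (E₀ + 3)
  have hV : vc1 + 1 ≤ V ∧ E₀ + 3 ≤ V := ⟨le_max_left _ _, le_max_right _ _⟩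
  have hIcc : Icc vc1 V ⊆ Ici 4 := (Icc_subset_Ici_iff (by linarith)).2 hvc1.le
  obtain ⟨vc2, ⟨⟨hvc12, -⟩, hvc2⟩, -⟩ := exists_unique_zero_of_strictAntiOn (by linarith)
    ((Gf_neg_two_add_self_continuousOn E₀ τ).mono hIcc) (hanti.mono hIcc)
    (hvc1_zero ▸ (hbelow vc1 ⟨hvc1.le, le_rfl⟩).1)
    ((Gf_neg_two_add_self_le (by linarith)).trans_lt (by linarith))
  have hvc2_mem : vc2 ∈ Ici 4 := by simp only [mem_Ici]; linarith
  refine ⟨Gf_neg_two_add_self E₀ τ, hanti.mono Ioi_subset_Ici_self, hbelow, vc2, hvc12, hvc2,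
    fun v hv hzero => hanti.injOn hv.le hvc2_mem (hzero.trans hvc2.symm), fun v hv => ?_,
    fun v hv hle x hx => (Gf_pos_of_mem_Ioo ?_ hx).ne'⟩
  · refine exists_unique_zero_of_strictAntiOn (by linarith) (Gf_continuousOn E₀ τ v)
      (Gf_strictAntiOn E₀ τ v) (Gf_two_pos (by linarith) (by linarith)) ?_
    rw [sub_eq_neg_add, ← hvc2]
    exact hanti hvc2_mem (by simp only [mem_Ici]; linarith) hv
  · exact hvc2 ▸ hanti.antitoneOn hv.le hvc2_mem hle

/-- `g₂(v) := G(-2+v;v)` is strictly decreasing on `(4,∞)`, satisfies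
`g₂(v) > G(2+v;v) ≥ 0` for `4 ≤ v ≤ v_{c,1}`, and there is a unique `v_{c,2} > v_{c,1}`
with `g₂(v_{c,2}) = 0`; for `v > v_{c,2}` there is a unique zero `λ(v) ∈ (2, v-2)` of
`G(·;v)`, while for `4 < v ≤ v_{c,2}` there is no zero in `(2, -2+v)`. -/
theorem stmt9 (E₀ : ℝ) (hE : 10 ≤ E₀) :
    ∃ τ₀ > (0 : ℝ), ∀ τ : ℝ, τ ≠ 0 → |τ| ≤ τ₀ →
      ∀ vc1 : ℝ, 4 < vc1 → Gf E₀ τ (2 + vc1) vc1 = 0 →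
        (∀ v : ℝ, Gf E₀ τ (-2 + v) v
            = E₀ + 2 - v + τ ^ 2 * (zeta1 (-2) + zeta1 (-2 + v))) ∧
        StrictAntiOn (fun v => Gf E₀ τ (-2 + v) v) (Set.Ioi 4) ∧
        (∀ v ∈ Set.Icc (4 : ℝ) vc1,
          Gf E₀ τ (2 + v) v < Gf E₀ τ (-2 + v) v ∧ 0 ≤ Gf E₀ τ (2 + v) v) ∧
        ∃ vc2 : ℝ, vc1 < vc2 ∧ Gf E₀ τ (-2 + vc2) vc2 = 0 ∧
          (∀ v : ℝ, 4 < v → Gf E₀ τ (-2 + v) v = 0 → v = vc2) ∧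
          (∀ v : ℝ, vc2 < v →
            ∃! lam : ℝ, lam ∈ Set.Ioo 2 (v - 2) ∧ Gf E₀ τ lam v = 0) ∧
          (∀ v : ℝ, 4 < v → v ≤ vc2 → ∀ x ∈ Set.Ioo (2 : ℝ) (-2 + v), Gf E₀ τ x v ≠ 0) :=
  stmt9_general E₀
end

section
/- Define F(t,v) := G(t² + v + 2; v) for t > 0, explicitly F(t,v) = E₀ - v - 2 - t² + (τ²/2)(2 + 2t² - t√(4+t²) + v + 2 - √((v+t²)(v+4+t²))). Then F extends to a C¹ (indeed smooth) function in a neighborhood of (0, v_{c,1}) with F(0, v_{c,1}) = 0, ∂_t F(0, v_{c,1}) = -τ² ≠ 0, and ∂_v F(0, v_{c,1}) = -1 + O(τ²). -/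
/-- `F(t,v) = G(t²+v+2; v)`, written so that the threshold square-root singularity is removed. -/
noncomputable def Ff (E₀ τ : ℝ) (p : ℝ × ℝ) : ℝ :=
  E₀ - p.2 - 2 - p.1 ^ 2 + τ ^ 2 / 2 *
    (2 + 2 * p.1 ^ 2 - p.1 * Real.sqrt (4 + p.1 ^ 2) + p.2 + 2 -
      Real.sqrt ((p.2 + p.1 ^ 2) * (p.2 + 4 + p.1 ^ 2)))

lemma zeta1_eq {y : ℝ} (hy : 2 ≤ y) : zeta1 y = (y - Real.sqrt (y ^ 2 - 4)) / 2 := by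
  have hy0 : 0 < y := by linarith
  unfold zeta1
  rw [show (1 - 4 / y ^ 2) = (y ^ 2 - 4) / y ^ 2 by field_simp,
    Real.sqrt_div (by nlinarith : (0:ℝ) ≤ y ^ 2 - 4), Real.sqrt_sq hy0.le]
  field_simp

/-- `F(t,v) := G(t²+v+2;v)` for `t > 0` extends smoothly near `(0, v_{c,1})`, with
`F(0,v_{c,1}) = 0`, `∂ₜF(0,v_{c,1}) = -τ² ≠ 0` and `∂ᵥF(0,v_{c,1}) = -1 + O(τ²)`. -/
theorem stmt10 (E₀ : ℝ) (hE : 10 ≤ E₀) :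
    ∃ τ₀ > (0 : ℝ), ∃ C > (0 : ℝ), ∀ τ : ℝ, τ ≠ 0 → |τ| ≤ τ₀ →
      ∀ vc1 : ℝ, 4 < vc1 → Gf E₀ τ (2 + vc1) vc1 = 0 →
        (∀ t v : ℝ, 0 < t → 0 ≤ v → Ff E₀ τ (t, v) = Gf E₀ τ (t ^ 2 + v + 2) v) ∧
        (∃ ε > (0 : ℝ), ContDiffOn ℝ (⊤ : ℕ∞) (Ff E₀ τ) (Metric.ball ((0 : ℝ), vc1) ε)) ∧
        Ff E₀ τ (0, vc1) = 0 ∧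
        HasDerivAt (fun t => Ff E₀ τ (t, vc1)) (-τ ^ 2) 0 ∧
        (-τ ^ 2 : ℝ) ≠ 0 ∧
        ∃ d : ℝ, HasDerivAt (fun v => Ff E₀ τ (0, v)) d vc1 ∧ |d + 1| ≤ C * τ ^ 2 := by
  refine ⟨1, one_pos, 1, one_pos, fun τ hτ hτ1 vc1 hv hG => ?_⟩
  have hτ2 : (0:ℝ) < τ ^ 2 := by positivity
  constructor
  · -- part 1
    intro t v ht hv0
    have h1 : zeta1 (t ^ 2 + v + 2 - v) = ((t ^ 2 + 2) - t * Real.sqrt (4 + t ^ 2)) / 2 := by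
      rw [show t ^ 2 + v + 2 - v = t ^ 2 + 2 by ring, zeta1_eq (by nlinarith)]
      rw [show (t ^ 2 + 2) ^ 2 - 4 = t ^ 2 * (4 + t ^ 2) by ring,
        Real.sqrt_mul (sq_nonneg t), Real.sqrt_sq ht.le]
    have h2 : zeta1 (t ^ 2 + v + 2) =
        ((t ^ 2 + v + 2) - Real.sqrt ((v + t ^ 2) * (v + 4 + t ^ 2))) / 2 := by
      rw [zeta1_eq (by nlinarith)]
      congr 2
      ring
    simp only [Ff, Gf, h1, h2]
    ring
  refine ⟨?_, ?_, ?_, neg_ne_zero.mpr (pow_ne_zero 2 hτ), ?_⟩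
  · -- smoothness
    refine ⟨1, one_pos, fun p hp => ?_⟩
    have hp2 : 3 < p.2 := by
      have h := Metric.mem_ball.1 hp
      rw [Prod.dist_eq] at h
      have h2 : dist p.2 vc1 < 1 := (le_max_right _ _).trans_lt h
      rw [Real.dist_eq] at h2
      have := abs_sub_lt_iff.1 h2
      linarith [this.2]
    have h1 : ContDiffAt ℝ (⊤ : ℕ∞) (fun p : ℝ × ℝ => p.1) p := contDiff_fst.contDiffAt
    have h2 : ContDiffAt ℝ (⊤ : ℕ∞) (fun p : ℝ × ℝ => p.2) p := contDiff_snd.contDiffAt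
    have hs1 : ContDiffAt ℝ (⊤ : ℕ∞) (fun p : ℝ × ℝ => Real.sqrt (4 + p.1 ^ 2)) p :=
      (contDiffAt_const.add (h1.pow 2)).sqrt
        (show (4:ℝ) + p.1 ^ 2 ≠ 0 from by positivity)
    have hs2 : ContDiffAt ℝ (⊤ : ℕ∞)
        (fun p : ℝ × ℝ => Real.sqrt ((p.2 + p.1 ^ 2) * (p.2 + 4 + p.1 ^ 2))) p :=
      ((h2.add (h1.pow 2)).mul ((h2.add contDiffAt_const).add (h1.pow 2))).sqrt
        (show (p.2 + p.1 ^ 2) * (p.2 + 4 + p.1 ^ 2) ≠ 0 from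
          ne_of_gt (by nlinarith [sq_nonneg p.1]))
    have hbody : ContDiffAt ℝ (⊤ : ℕ∞) (fun q : ℝ × ℝ =>
        E₀ - q.2 - 2 - q.1 ^ 2 + τ ^ 2 / 2 *
          (2 + 2 * q.1 ^ 2 - q.1 * Real.sqrt (4 + q.1 ^ 2) + q.2 + 2 -
            Real.sqrt ((q.2 + q.1 ^ 2) * (q.2 + 4 + q.1 ^ 2)))) p :=
      ((((contDiffAt_const.sub h2).sub contDiffAt_const).sub (h1.pow 2)).add
        (contDiffAt_const.mul (((((contDiffAt_const.add (contDiffAt_const.mul (h1.pow 2))).sub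
          (h1.mul hs1)).add h2).add contDiffAt_const).sub hs2)))
    exact hbody.contDiffWithinAt
  · -- value at (0, vc1)
    have hz2 : zeta1 (2 + vc1 - vc1) = 1 := by
      rw [show 2 + vc1 - vc1 = (2:ℝ) by ring, zeta1_eq le_rfl]
      norm_num
    have hz : zeta1 (2 + vc1) = ((2 + vc1) - Real.sqrt (vc1 * (vc1 + 4))) / 2 := by
      rw [zeta1_eq (by linarith)]
      congr 2
      ring
    simp only [Gf, hz2, hz] at hG
    simp only [Ff]
    norm_num
    linarith
  · -- t-derivative
    have h2 : HasDerivAt (fun t : ℝ => t ^ 2) 0 0 := by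
      simpa using hasDerivAt_pow 2 (0:ℝ)
    have hs1 : HasDerivAt (fun t : ℝ => Real.sqrt (4 + t ^ 2)) 0 0 := by
      simpa using (h2.const_add 4).sqrt (by norm_num : (4 + (0:ℝ) ^ 2) ≠ 0)
    have hsqrt4 : Real.sqrt (4 + (0:ℝ) ^ 2) = 2 := by
      rw [show (4 + (0:ℝ) ^ 2) = 2 ^ 2 by norm_num, Real.sqrt_sq (by norm_num)]
    have hsqrt4' : Real.sqrt (4:ℝ) = 2 := by
      rw [show (4:ℝ) = 2 ^ 2 by norm_num, Real.sqrt_sq (by norm_num : (0:ℝ) ≤ 2)]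
    have hts : HasDerivAt (fun t : ℝ => t * Real.sqrt (4 + t ^ 2)) 2 0 := by
      have := (hasDerivAt_id (0:ℝ)).fun_mul hs1
      simpa [hsqrt4, hsqrt4'] using this
    have hbig : HasDerivAt
        (fun t : ℝ => Real.sqrt ((vc1 + t ^ 2) * (vc1 + 4 + t ^ 2))) 0 0 := by
      have hin : HasDerivAt (fun t : ℝ => (vc1 + t ^ 2) * (vc1 + 4 + t ^ 2)) 0 0 := by
        simpa using (h2.const_add vc1).fun_mul (h2.const_add (vc1 + 4))
      have := hin.sqrt (by nlinarith : ((vc1 + (0:ℝ) ^ 2) * (vc1 + 4 + (0:ℝ) ^ 2)) ≠ 0)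
      simpa using this
    have hA : HasDerivAt (fun t : ℝ =>
        2 + 2 * t ^ 2 - t * Real.sqrt (4 + t ^ 2) + vc1 + 2 -
          Real.sqrt ((vc1 + t ^ 2) * (vc1 + 4 + t ^ 2))) (-2) 0 := by
      have := ((((h2.const_mul 2).const_add 2).fun_sub hts).add_const vc1).add_const 2 |>.fun_sub hbig
      refine this.congr_deriv ?_
      ring
    have := ((((hasDerivAt_const (0:ℝ) (E₀ - vc1 - 2)).fun_sub h2)).fun_add (hA.const_mul (τ ^ 2 / 2)))
    refine this.congr_deriv ?_
    ring
  · -- v-derivative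
    set s : ℝ := Real.sqrt (vc1 * (vc1 + 4)) with hsdef
    have hs1 : vc1 ≤ s := by
      calc vc1 = Real.sqrt (vc1 ^ 2) := (Real.sqrt_sq (by linarith)).symm
        _ ≤ s := Real.sqrt_le_sqrt (by nlinarith)
    refine ⟨-1 + τ ^ 2 / 2 * (1 - (2 * vc1 + 4) / (2 * s)), ?_, ?_⟩
    · have key : (fun v => Ff E₀ τ (0, v)) =
          fun v : ℝ => E₀ - v - 2 + τ ^ 2 / 2 * (2 + v + 2 - Real.sqrt (v * (v + 4))) := by
        funext v
        simp only [Ff]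
        norm_num
      rw [key]
      have hinner : HasDerivAt (fun v : ℝ => v * (v + 4)) (2 * vc1 + 4) vc1 := by
        have := (hasDerivAt_id vc1).fun_mul ((hasDerivAt_id vc1).add_const 4)
        refine this.congr_deriv ?_
        simp [id]
        ring
      have hsq : HasDerivAt (fun v : ℝ => Real.sqrt (v * (v + 4)))
          ((2 * vc1 + 4) / (2 * s)) vc1 := hinner.sqrt (by nlinarith)
      have := (((hasDerivAt_const vc1 E₀).fun_sub (hasDerivAt_id vc1)).sub_const 2).fun_add
        ((((hasDerivAt_id vc1).const_add 2).add_const 2 |>.fun_sub hsq).const_mul (τ ^ 2 / 2))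
      refine this.congr_deriv ?_
      simp [id]
    · have hr0 : 0 ≤ (2 * vc1 + 4) / (2 * s) := div_nonneg (by linarith) (by linarith)
      have hr2 : (2 * vc1 + 4) / (2 * s) ≤ 2 := by
        rw [div_le_iff₀ (by linarith)]
        nlinarith
      have habs : |1 - (2 * vc1 + 4) / (2 * s)| ≤ 1 :=
        abs_le.mpr ⟨by linarith, by linarith⟩
      calc |(-1 + τ ^ 2 / 2 * (1 - (2 * vc1 + 4) / (2 * s))) + 1|
          = τ ^ 2 / 2 * |1 - (2 * vc1 + 4) / (2 * s)| := by
            rw [show (-1 + τ ^ 2 / 2 * (1 - (2 * vc1 + 4) / (2 * s))) + 1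
              = τ ^ 2 / 2 * (1 - (2 * vc1 + 4) / (2 * s)) by ring, abs_mul, abs_of_nonneg (by positivity)]
        _ ≤ τ ^ 2 / 2 * 1 := by nlinarith
        _ ≤ 1 * τ ^ 2 := by nlinarith
end
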